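/- Let n ≥ 1 and fix 1 ≤ j ≤ n. Then for every real x, the Lagrange basis polynomial at the shifted Jacobi–Gauss nodes satisfies ℓ_j(x) = Σ_{k=1}^{n} λ̂_{jk} · P_{k−1}^{(1,1)}(2x−1), where λ̂_{jk} := [(2k+1)(k+1)/k] · ŵ_j · P_{k−1}^{(1,1)}(2ξ̂_j−1). -/

import Mathlib

open Real MeasureTheory intervalIntegral Finset

/-- Jacobi polynomial `P_n^{(a,b)}(τ)` for natural index `n` (general real parameters). -/
noncomputable def jacobiPNat (n : ℕ) (a b τ : ℝ) : ℝ :=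
  (1 / 2 ^ n) * ∑ k ∈ Finset.range (n + 1),
    (Real.Gamma ((n : ℝ) + a + 1) / (Real.Gamma ((k : ℝ) + a + 1) * (Nat.factorial (n - k) : ℝ))) *
    (Real.Gamma ((n : ℝ) + b + 1) / (Real.Gamma (((n - k : ℕ) : ℝ) + b + 1) * (Nat.factorial k : ℝ))) *
    (τ - 1) ^ k * (τ + 1) ^ (n - k)

/-- Jacobi polynomial with integer index, with the convention `P_{-1}^{(a,b)} = 0`. -/
noncomputable def jacobiP (m : ℤ) (a b τ : ℝ) : ℝ :=
  if 0 ≤ m then jacobiPNat m.toNat a b τ else 0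

/-- Left Riemann--Liouville fractional derivative of order `α` (for `1 < α < 2`):
`(₀D_x^α g)(x) = (1/Γ(2−α)) (d²/dx²) ∫_0^x (x−s)^{1−α} g(s) ds`. -/
noncomputable def leftRL (α : ℝ) (g : ℝ → ℝ) (x : ℝ) : ℝ :=
  (1 / Real.Gamma (2 - α)) *
    deriv (deriv (fun t : ℝ => ∫ s in (0:ℝ)..t, (t - s) ^ (1 - α) * g s)) x

/-- Right Riemann--Liouville fractional derivative of order `α` (for `1 < α < 2`):
`(ₓD_1^α g)(x) = (1/Γ(2−α)) (d²/dx²) ∫_x^1 (s−x)^{1−α} g(s) ds`. -/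
noncomputable def rightRL (α : ℝ) (g : ℝ → ℝ) (x : ℝ) : ℝ :=
  (1 / Real.Gamma (2 - α)) *
    deriv (deriv (fun t : ℝ => ∫ s in t..(1:ℝ), (s - t) ^ (1 - α) * g s)) x

/-- The function `ζ_k` appearing in the fractional differentiation matrices. -/
noncomputable def zeta (β : ℝ) (k : ℕ) (x : ℝ) : ℝ :=
  Real.Gamma ((k : ℝ) + 1) / Real.Gamma ((k : ℝ) - 1 + β) * x ^ (β - 1) *
      jacobiP ((k : ℤ) - 1) (3 - β) (β - 1) (2 * x - 1)
    - Real.Gamma ((k : ℝ) + 2) / Real.Gamma ((k : ℝ) + β) * (((k : ℝ) + 2) / (2 * (k : ℝ) + 1)) *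
        x ^ β * jacobiP ((k : ℤ) - 1) (3 - β) β (2 * x - 1)
    - Real.Gamma ((k : ℝ) + 1) / Real.Gamma ((k : ℝ) - 1 + β) * ((k : ℝ) / (2 * (k : ℝ) + 1)) *
        x ^ β * jacobiP ((k : ℤ) - 2) (3 - β) β (2 * x - 1)

/-!
The shifted Jacobi polynomials `p_m(x) = P_m^{(1,1)}(2x-1)` satisfy the Rodrigues formula
`m! x (x-1) p_m = (d/dx)^m [(x-1)^{m+1} x^{m+1}]`, so `m` integrations by parts show that they are
orthogonal for the weight `x(1-x)` on `[0,1]`, with `‖p_m‖² = (m+1)/((m+2)(2m+3))` by a Beta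
integral. Hence `ℓ_j = ∑_{m<n} (⟨ℓ_j, p_m⟩ / ‖p_m‖²) p_m`. The nodes are the zeros of `p_n`, so the
nodal polynomial is a multiple of `p_n`; and `ℓ_j (p_m - p_m(ξ̂_j))` vanishes at every node, so it
is the nodal polynomial times a polynomial of degree `< n`. This is exactness of Gauss quadrature:
`⟨ℓ_j, p_m⟩ = p_m(ξ̂_j) ŵ_j`.
-/

open Polynomial
open scoped Nat

noncomputable def unitIntervalIntegral : ℝ[X] →ₗ[ℝ] ℝ where
  toFun p := ∫ x in (0 : ℝ)..1, p.eval x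
  map_add' p q := by
    simp only [eval_add]
    exact integral_add (p.continuous.intervalIntegrable 0 1) (q.continuous.intervalIntegrable 0 1)
  map_smul' c p := by simp [intervalIntegral.integral_const_mul]

lemma unitIntervalIntegral_apply (p : ℝ[X]) :
    unitIntervalIntegral p = ∫ x in (0 : ℝ)..1, p.eval x := rfl

lemma unitIntervalIntegral_mul_derivative (q : ℝ[X]) {G : ℝ[X]} (hG₀ : G.eval 0 = 0)
    (hG₁ : G.eval 1 = 0) :
    unitIntervalIntegral (q * derivative G) = -unitIntervalIntegral (derivative q * G) := by
  simp only [unitIntervalIntegral_apply, eval_mul]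
  rw [integral_mul_deriv_eq_deriv_mul (fun x _ => q.hasDerivAt x) (fun x _ => G.hasDerivAt x)
    ((derivative q).continuous.intervalIntegrable 0 1)
    ((derivative G).continuous.intervalIntegrable 0 1), hG₀, hG₁]
  ring

lemma unitIntervalIntegral_mul_iterate_derivative (k : ℕ) (q : ℝ[X]) {F : ℝ[X]}
    (hF : ∀ i < k, (derivative^[i] F).eval 0 = 0 ∧ (derivative^[i] F).eval 1 = 0) :
    unitIntervalIntegral (q * derivative^[k] F) =
      (-1) ^ k * unitIntervalIntegral (derivative^[k] q * F) := by
  induction k generalizing q with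
  | zero => simp
  | succ k ih =>
    obtain ⟨h₀, h₁⟩ := hF k k.lt_succ_self
    rw [Function.iterate_succ_apply', unitIntervalIntegral_mul_derivative q h₀ h₁,
      ih (derivative q) (fun i hi => hF i (hi.trans k.lt_succ_self)),
      Function.iterate_succ_apply]
    ring

lemma integral_pow_mul_one_sub_pow (a b : ℕ) :
    ∫ x in (0 : ℝ)..1, x ^ a * (1 - x) ^ b = (a ! * b ! / (a + b + 1)! : ℝ) := by
  have h := Complex.betaIntegral_eq_Gamma_mul_div (a + 1) (b + 1)
    (by norm_cast; omega) (by norm_cast; omega)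
  simp only [Complex.betaIntegral, add_sub_cancel_right, Complex.cpow_natCast] at h
  rw [show ((a : ℂ) + 1 + (b + 1)) = ((a + b + 1 : ℕ) : ℂ) + 1 by push_cast; ring,
    Complex.Gamma_nat_eq_factorial, Complex.Gamma_nat_eq_factorial,
    Complex.Gamma_nat_eq_factorial] at h
  rw [← Complex.ofReal_inj, ← intervalIntegral.integral_ofReal]
  push_cast
  exact h

lemma Polynomial.iterate_derivative_eq_C_of_natDegree_le {R : Type*} [Semiring R] {p : R[X]}
    {m : ℕ} (hp : p.natDegree ≤ m) : derivative^[m] p = C ((m ! : R) * p.coeff m) := by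
  rw [eq_C_of_natDegree_le_zero ((natDegree_iterate_derivative p m).trans (by omega)),
    coeff_iterate_derivative, zero_add, Nat.descFactorial_self, nsmul_eq_mul]

theorem Polynomial.Sequence.eq_sum_div_of_orthogonal {F : Type*} [Field F] (S : Sequence F)
    (ψ : F[X] →ₗ[F] F) (horth : ∀ i j, i ≠ j → ψ (S i * S j) = 0)
    (hnorm : ∀ i, ψ (S i * S i) ≠ 0) {n : ℕ} {p : F[X]} (hp : p.degree < n) :
    p = ∑ m ∈ range n, (ψ (p * S m) / ψ (S m * S m)) • S m := by
  have hspan : p ∈ Submodule.span F (S '' ↑(range n)) := by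
    rw [coe_range, S.span_degreeLT fun i _ => isUnit_iff_ne_zero.mpr (leadingCoeff_ne_zero.mpr
      (S.ne_zero i))]
    exact mem_degreeLT.mpr hp
  obtain ⟨c, rfl⟩ := (Submodule.mem_span_image_finset_iff_exists_fun' (R := F)).mp hspan
  refine sum_congr rfl fun m hm => ?_
  rw [sum_mul, map_sum, sum_eq_single_of_mem m hm fun i _ him => by
    rw [smul_mul_assoc, map_smul, horth i m him, smul_zero], smul_mul_assoc, map_smul, smul_eq_mul,
    mul_div_cancel_right₀ _ (hnorm m)]

theorem Lagrange.map_basis_mul_eq_eval_mul {F ι : Type*} [Field F] [DecidableEq ι]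
    {s : Finset ι} {v : ι → F} {i : ι} (hi : i ∈ s) (ψ : F[X] →ₗ[F] F)
    (horth : ∀ q : F[X], q.natDegree < #s → ψ (nodal s v * q) = 0) {r : F[X]}
    (hr : r.natDegree < #s) :
    ψ (Lagrange.basis s v i * r) = r.eval (v i) * ψ (Lagrange.basis s v i) := by
  set q := (r - C (r.eval (v i))) /ₘ (X - C (v i))
  have hq : (X - C (v i)) * q = r - C (r.eval (v i)) :=
    mul_divByMonic_eq_iff_isRoot.mpr (by simp)
  have hbasis : Lagrange.basis s v i * (X - C (v i)) = C (nodalWeight s v i) * nodal s v := by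
    rw [basis_eq_prod_sub_inv_mul_nodal_div hi, ← nodal_erase_eq_nodal_div hi,
      nodal_eq_mul_nodal_erase hi]
    ring
  have hsplit : Lagrange.basis s v i * r =
      C (r.eval (v i)) * Lagrange.basis s v i + nodal s v * (C (nodalWeight s v i) * q) := by
    linear_combination (Lagrange.basis s v i) * hq.symm + q * hbasis
  have hqdeg : (C (nodalWeight s v i) * q).natDegree < #s := by
    refine (natDegree_C_mul_le _ _).trans_lt ?_
    rw [natDegree_divByMonic _ (monic_X_sub_C _), natDegree_sub_C, natDegree_X_sub_C]
    omega
  rw [hsplit, map_add, horth _ hqdeg, add_zero, C_mul', map_smul, smul_eq_mul]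

theorem Lagrange.eq_C_leadingCoeff_mul_nodal {F ι : Type*} [Field F] {s : Finset ι} {v : ι → F}
    (hvs : Set.InjOn v s) {p : F[X]} (hdeg : p.natDegree ≤ #s)
    (hroot : ∀ i ∈ s, p.eval (v i) = 0) :
    p = C p.leadingCoeff * nodal s v := by
  refine eq_leadingCoeff_mul_of_monic_of_dvd_of_natDegree_le nodal_monic ?_
    (by rwa [natDegree_nodal])
  exact prod_dvd_of_coprime (fun i hi j hj hij => isCoprime_X_sub_C_of_isUnit_sub
    (sub_ne_zero_of_ne fun h => hij (hvs hi hj h)).isUnit)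
    fun i hi => dvd_iff_isRoot.mpr (hroot i hi)

noncomputable def shiftedJacobi (m : ℕ) : ℝ[X] :=
  ∑ k ∈ Finset.range (m + 1),
    C (((m + 1).choose (k + 1) * (m + 1).choose k : ℕ) : ℝ) * (X - C 1) ^ k * X ^ (m - k)

lemma Real.Gamma_nat_add_one_add_one (n : ℕ) : Real.Gamma ((n : ℝ) + 1 + 1) = (n + 1)! := by
  rw [← Real.Gamma_nat_eq_factorial]; push_cast; rfl

lemma eval_shiftedJacobi (m : ℕ) (x : ℝ) :
    (shiftedJacobi m).eval x = jacobiPNat m 1 1 (2 * x - 1) := by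
  rw [jacobiPNat, shiftedJacobi, eval_finsetSum, Finset.mul_sum]
  refine Finset.sum_congr rfl fun k hk => ?_
  have hkm : k ≤ m := Nat.lt_succ_iff.mp (Finset.mem_range.mp hk)
  simp only [eval_mul, eval_pow, eval_sub, eval_X, eval_C, Nat.cast_mul,
    Real.Gamma_nat_add_one_add_one]
  rw [Nat.cast_choose ℝ (by omega : k + 1 ≤ m + 1), Nat.cast_choose ℝ (by omega : k ≤ m + 1),
    show m + 1 - (k + 1) = m - k by omega, show m + 1 - k = m - k + 1 by omega,
    show 2 * x - 1 - 1 = 2 * (x - 1) by ring, show 2 * x - 1 + 1 = 2 * x by ring,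
    mul_pow, mul_pow,
    show (2 : ℝ) ^ m = 2 ^ k * 2 ^ (m - k) by rw [← pow_add, Nat.add_sub_cancel' hkm]]
  field_simp

lemma natDegree_shiftedJacobi_le (m : ℕ) : (shiftedJacobi m).natDegree ≤ m := by
  refine natDegree_sum_le_of_forall_le _ _ fun k hk => ?_
  have hkm : k ≤ m := Nat.lt_succ_iff.mp (Finset.mem_range.mp hk)
  rw [mul_assoc]
  refine (natDegree_C_mul_le _ _).trans ((natDegree_mul_le_of_le
    (natDegree_pow_le_of_le k (natDegree_X_sub_C_le 1))
    (natDegree_pow_le_of_le _ natDegree_X_le)).trans ?_)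
  omega

lemma coeff_shiftedJacobi_self (m : ℕ) : (shiftedJacobi m).coeff m = (2 * m + 2).choose m := by
  have hmonic (k : ℕ) (hk : k ≤ m) : ((X - C (1 : ℝ)) ^ k * X ^ (m - k)).coeff m = 1 := by
    have h := ((monic_X_sub_C (1 : ℝ)).pow k).mul (monic_X_pow (m - k))
    have hdeg : ((X - C (1 : ℝ)) ^ k * X ^ (m - k)).natDegree = m := by
      rw [((monic_X_sub_C (1 : ℝ)).pow k).natDegree_mul (monic_X_pow _), natDegree_pow,
        natDegree_X_sub_C, natDegree_X_pow]
      omega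
    have := h.coeff_natDegree
    rwa [hdeg] at this
  have hvandermonde : ∑ k ∈ Finset.range (m + 1), (m + 1).choose (k + 1) * (m + 1).choose k
      = (2 * m + 2).choose m := by
    rw [show 2 * m + 2 = (m + 1) + (m + 1) by ring, Nat.add_choose_eq,
      Finset.Nat.sum_antidiagonal_eq_sum_range_succ_mk]
    refine Finset.sum_congr rfl fun k hk => ?_
    have hkm := Finset.mem_range.mp hk
    rw [Nat.choose_symm_of_eq_add (show m + 1 = (k + 1) + (m - k) by omega), mul_comm]
  rw [shiftedJacobi, finsetSum_coeff, ← hvandermonde, Nat.cast_sum]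
  refine Finset.sum_congr rfl fun k hk => ?_
  rw [mul_assoc, coeff_C_mul, hmonic k (Nat.lt_succ_iff.mp (Finset.mem_range.mp hk)), mul_one]

lemma degree_shiftedJacobi (m : ℕ) : (shiftedJacobi m).degree = m :=
  degree_eq_of_le_of_coeff_ne_zero (degree_le_of_natDegree_le (natDegree_shiftedJacobi_le m))
    (by rw [coeff_shiftedJacobi_self]; exact_mod_cast (Nat.choose_pos (by omega)).ne')

noncomputable def shiftedJacobiSequence : Polynomial.Sequence ℝ :=
  ⟨shiftedJacobi, degree_shiftedJacobi⟩

lemma shiftedJacobiSequence_apply (m : ℕ) : shiftedJacobiSequence m = shiftedJacobi m := rfl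

lemma shiftedJacobi_rodrigues (m : ℕ) :
    derivative^[m] ((X - C 1) ^ (m + 1) * X ^ (m + 1)) =
      C (m ! : ℝ) * ((X - C 1) * X * shiftedJacobi m) := by
  rw [iterate_derivative_mul, shiftedJacobi, Finset.mul_sum, Finset.mul_sum]
  refine Finset.sum_congr rfl fun k hk => ?_
  have hkm : k ≤ m := Nat.lt_succ_iff.mp (Finset.mem_range.mp hk)
  have hcoeff : m.choose k * ((m + 1).descFactorial (m - k) * (m + 1).descFactorial k) =
      m ! * ((m + 1).choose (k + 1) * (m + 1).choose k) := by
    rw [Nat.descFactorial_eq_factorial_mul_choose, Nat.descFactorial_eq_factorial_mul_choose,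
      Nat.choose_symm_of_eq_add (show m + 1 = (m - k) + (k + 1) by omega),
      ← Nat.choose_mul_factorial_mul_factorial hkm]
    ring
  have hcast := congrArg (Nat.cast : ℕ → ℝ[X]) hcoeff
  push_cast at hcast
  rw [iterate_derivative_X_sub_pow, iterate_derivative_X_pow_eq_natCast_mul,
    show m + 1 - (m - k) = k + 1 by omega, show m + 1 - k = m - k + 1 by omega]
  simp only [nsmul_eq_mul, Nat.cast_mul, map_mul, map_natCast]
  linear_combination (X - C 1) ^ (k + 1) * X ^ (m - k + 1) * hcast

noncomputable def jacobiWeightIntegral : ℝ[X] →ₗ[ℝ] ℝ :=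
  unitIntervalIntegral ∘ₗ LinearMap.mulLeft ℝ (X * (1 - X))

lemma jacobiWeightIntegral_apply (p : ℝ[X]) :
    jacobiWeightIntegral p = ∫ x in (0 : ℝ)..1, x * (1 - x) * p.eval x := by
  simp [jacobiWeightIntegral, unitIntervalIntegral_apply, mul_assoc]

lemma eval_iterate_derivative_rodrigues_eq_zero {m i : ℕ} (hi : i < m + 1) :
    (derivative^[i] ((X - C 1) ^ (m + 1) * X ^ (m + 1) : ℝ[X])).eval 0 = 0 ∧
      (derivative^[i] ((X - C 1) ^ (m + 1) * X ^ (m + 1) : ℝ[X])).eval 1 = 0 := by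
  have hroot (t : ℝ) (h : (X - C t) ^ (m + 1) ∣ (X - C 1) ^ (m + 1) * X ^ (m + 1)) :
      (derivative^[i] ((X - C 1) ^ (m + 1) * X ^ (m + 1))).eval t = 0 :=
    dvd_iff_isRoot.mp <|
      (dvd_pow_self _ (by omega)).trans (pow_sub_dvd_iterate_derivative_of_pow_dvd i h)
  exact ⟨hroot 0 (by simp), hroot 1 (dvd_mul_right _ _)⟩

lemma jacobiWeightIntegral_shiftedJacobi_mul (m : ℕ) (q : ℝ[X]) :
    jacobiWeightIntegral (shiftedJacobi m * q) =
      (-1) ^ (m + 1) / m ! *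
        unitIntervalIntegral (derivative^[m] q * ((X - C 1) ^ (m + 1) * X ^ (m + 1))) := by
  have hfact : (m ! : ℝ) ≠ 0 := by positivity
  have hC : C (-(m ! : ℝ)⁻¹) * C (m ! : ℝ) = -1 := by rw [← C_mul]; simp [hfact]
  have hweight : X * (1 - X) * (shiftedJacobi m * q) =
      C (-(m ! : ℝ)⁻¹) * (q * derivative^[m] ((X - C 1) ^ (m + 1) * X ^ (m + 1))) := by
    rw [shiftedJacobi_rodrigues, map_one]
    linear_combination (-(q * (X - 1) * X * shiftedJacobi m)) * hC
  rw [jacobiWeightIntegral, LinearMap.comp_apply, LinearMap.mulLeft_apply, hweight, C_mul',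
    map_smul, smul_eq_mul, unitIntervalIntegral_mul_iterate_derivative m q
      fun i hi => eval_iterate_derivative_rodrigues_eq_zero (hi.trans m.lt_succ_self)]
  ring

lemma jacobiWeightIntegral_shiftedJacobi_mul_eq_zero {m : ℕ} {q : ℝ[X]} (hq : q.natDegree < m) :
    jacobiWeightIntegral (shiftedJacobi m * q) = 0 := by
  rw [jacobiWeightIntegral_shiftedJacobi_mul, iterate_derivative_eq_zero hq, zero_mul, map_zero,
    mul_zero]

lemma jacobiWeightIntegral_shiftedJacobi_mul_shiftedJacobi {i k : ℕ} (hik : i ≠ k) :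
    jacobiWeightIntegral (shiftedJacobi i * shiftedJacobi k) = 0 := by
  rcases hik.lt_or_gt with h | h
  · rw [mul_comm]
    exact jacobiWeightIntegral_shiftedJacobi_mul_eq_zero
      ((natDegree_shiftedJacobi_le i).trans_lt h)
  · exact jacobiWeightIntegral_shiftedJacobi_mul_eq_zero
      ((natDegree_shiftedJacobi_le k).trans_lt h)

lemma jacobiWeightIntegral_shiftedJacobi_mul_self (m : ℕ) :
    jacobiWeightIntegral (shiftedJacobi m * shiftedJacobi m) =
      (m + 1) / ((m + 2) * (2 * m + 3)) := by
  have hF : unitIntervalIntegral ((X - C 1) ^ (m + 1) * X ^ (m + 1)) =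
      (-1) ^ (m + 1) * ((m + 1)! * (m + 1)! / (2 * m + 3)!) := by
    rw [show 2 * m + 3 = m + 1 + (m + 1) + 1 by ring, ← integral_pow_mul_one_sub_pow,
      unitIntervalIntegral_apply, ← intervalIntegral.integral_const_mul]
    congr 1 with x
    simp only [eval_mul, eval_pow, eval_sub, eval_X, eval_C]
    rw [show x - 1 = -(1 - x) by ring, neg_pow]
    ring
  rw [jacobiWeightIntegral_shiftedJacobi_mul, iterate_derivative_eq_C_of_natDegree_le
    (natDegree_shiftedJacobi_le m), C_mul', map_smul, smul_eq_mul, hF,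
    coeff_shiftedJacobi_self, Nat.cast_choose ℝ (by omega : m ≤ 2 * m + 2),
    show 2 * m + 2 - m = m + 2 by omega]
  push_cast [Nat.factorial_succ, show 2 * m + 3 = (2 * m + 2) + 1 by ring]
  rcases neg_one_pow_eq_or ℝ (m + 1) with hsign | hsign <;> rw [hsign] <;> field_simp <;> ring

lemma jacobiWeightIntegral_nodal_mul_eq_zero {ι : Type*} {s : Finset ι} {v : ι → ℝ}
    (hvs : Set.InjOn v s) (hroot : ∀ i ∈ s, (shiftedJacobi #s).eval (v i) = 0) {q : ℝ[X]}
    (hq : q.natDegree < #s) : jacobiWeightIntegral (Lagrange.nodal s v * q) = 0 := by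
  have hnodal := Lagrange.eq_C_leadingCoeff_mul_nodal hvs (natDegree_shiftedJacobi_le #s) hroot
  have hlc : (shiftedJacobi #s).leadingCoeff ≠ 0 :=
    leadingCoeff_ne_zero.mpr (shiftedJacobiSequence.ne_zero #s)
  have h := jacobiWeightIntegral_shiftedJacobi_mul_eq_zero hq
  rwa [hnodal, mul_assoc, C_mul', map_smul, smul_eq_zero, or_iff_right hlc] at h

theorem Lagrange.basis_eq_sum_shiftedJacobi {ι : Type*} [DecidableEq ι] {s : Finset ι}
    {v : ι → ℝ} (hvs : Set.InjOn v s) (hroot : ∀ i ∈ s, (shiftedJacobi #s).eval (v i) = 0)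
    {i : ι} (hi : i ∈ s) :
    Lagrange.basis s v i = ∑ m ∈ range #s,
      ((2 * m + 3) * (m + 2) / (m + 1) * jacobiWeightIntegral (Lagrange.basis s v i) *
        (shiftedJacobi m).eval (v i)) • shiftedJacobi m := by
  refine (shiftedJacobiSequence.eq_sum_div_of_orthogonal jacobiWeightIntegral
    (fun _ _ => jacobiWeightIntegral_shiftedJacobi_mul_shiftedJacobi)
    (fun m => by
      rw [shiftedJacobiSequence_apply, jacobiWeightIntegral_shiftedJacobi_mul_self]
      positivity)
    (by
      rw [degree_basis hvs hi]
      exact_mod_cast Nat.sub_lt (card_pos.mpr ⟨i, hi⟩) one_pos)).trans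
    (sum_congr rfl fun m hm => ?_)
  rw [shiftedJacobiSequence_apply, map_basis_mul_eq_eval_mul hi _
    (fun q hq => jacobiWeightIntegral_nodal_mul_eq_zero hvs hroot hq)
    ((natDegree_shiftedJacobi_le m).trans_lt (mem_range.mp hm)),
    jacobiWeightIntegral_shiftedJacobi_mul_self]
  field_simp

lemma jacobiP_natCast_one_add_sub_one (m : ℕ) (a b τ : ℝ) :
    jacobiP (((1 + m : ℕ) : ℤ) - 1) a b τ = jacobiPNat m a b τ := by
  rw [jacobiP, if_pos (by omega), show (((1 + m : ℕ) : ℤ) - 1).toNat = m by omega]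

theorem lagrange_basis_expansion_general (n : ℕ) (ξ : Fin n → ℝ)
    (hξinj : Function.Injective ξ)
    (hξroot : ∀ i, jacobiPNat n 1 1 (ξ i) = 0)
    (ξh : Fin n → ℝ) (hξh : ∀ i, ξh i = (ξ i + 1) / 2)
    (ℓ : Fin n → ℝ → ℝ)
    (hℓ : ∀ j x, ℓ j x = ∏ k ∈ Finset.univ.erase j, (x - ξh k) / (ξh j - ξh k))
    (w : Fin n → ℝ) (hw : ∀ j, w j = ∫ x in (0:ℝ)..1, x * (1 - x) * ℓ j x)
    (j : Fin n) (x : ℝ) :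
    ℓ j x = ∑ k ∈ Finset.Icc 1 n,
      ((2 * (k : ℝ) + 1) * ((k : ℝ) + 1) / (k : ℝ)) * w j *
        jacobiP ((k : ℤ) - 1) 1 1 (2 * ξh j - 1) * jacobiP ((k : ℤ) - 1) 1 1 (2 * x - 1) := by
  have hinj : Function.Injective ξh := fun a b hab => hξinj <| by
    rw [hξh, hξh] at hab; linarith
  have hroot : ∀ i ∈ univ, (shiftedJacobi #(univ : Finset (Fin n))).eval (ξh i) = 0 := by
    intro i _
    rw [card_univ, Fintype.card_fin, eval_shiftedJacobi, hξh,
      show 2 * ((ξ i + 1) / 2) - 1 = ξ i by ring, hξroot]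
  have hℓ_eq (y : ℝ) : ℓ j y = (Lagrange.basis univ ξh j).eval y := by
    simp [hℓ, Lagrange.basis, Lagrange.basisDivisor, eval_prod, div_eq_inv_mul]
  have hw_eq : w j = jacobiWeightIntegral (Lagrange.basis univ ξh j) := by
    simp_rw [hw, jacobiWeightIntegral_apply, hℓ_eq]
  rw [hℓ_eq, Lagrange.basis_eq_sum_shiftedJacobi hinj.injOn hroot (mem_univ j), eval_finsetSum,
    card_univ, Fintype.card_fin, ← Ico_add_one_right_eq_Icc, sum_Ico_eq_sum_range,
    Nat.add_sub_cancel, ← hw_eq]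
  refine sum_congr rfl fun m _ => ?_
  rw [eval_smul, smul_eq_mul, jacobiP_natCast_one_add_sub_one, jacobiP_natCast_one_add_sub_one,
    ← eval_shiftedJacobi, ← eval_shiftedJacobi]
  push_cast
  ring

/-- expansion of the Lagrange basis polynomial `ℓ_j` at the shifted
Jacobi--Gauss nodes in shifted Jacobi polynomials, with coefficients
`λ̂_{jk} = [(2k+1)(k+1)/k]·ŵ_j·P_{k−1}^{(1,1)}(2ξ̂_j−1)`. -/
theorem lagrange_basis_expansion (n : ℕ) (hn : 1 ≤ n) (ξ : Fin n → ℝ)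
    (hξmem : ∀ i, ξ i ∈ Set.Ioo (-1 : ℝ) 1)
    (hξinj : Function.Injective ξ)
    (hξroot : ∀ i, jacobiPNat n 1 1 (ξ i) = 0)
    (ξh : Fin n → ℝ) (hξh : ∀ i, ξh i = (ξ i + 1) / 2)
    (ℓ : Fin n → ℝ → ℝ)
    (hℓ : ∀ j x, ℓ j x = ∏ k ∈ Finset.univ.erase j, (x - ξh k) / (ξh j - ξh k))
    (w : Fin n → ℝ) (hw : ∀ j, w j = ∫ x in (0:ℝ)..1, x * (1 - x) * ℓ j x)
    (j : Fin n) (x : ℝ) :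
    ℓ j x = ∑ k ∈ Finset.Icc 1 n,
      ((2 * (k : ℝ) + 1) * ((k : ℝ) + 1) / (k : ℝ)) * w j *
        jacobiP ((k : ℤ) - 1) 1 1 (2 * ξh j - 1) * jacobiP ((k : ℤ) - 1) 1 1 (2 * x - 1) :=
  lagrange_basis_expansion_general n ξ hξinj hξroot ξh hξh ℓ hℓ w hw j x
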